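/- arXiv:1212.6466 — 4 statements merged into one kernel-verified Lean document; each statement's English description precedes it below -/
import Mathlib

section
/- Let G be a 2-connected graph on n ≥ 3 vertices. If for every pair of vertices u, v with distance exactly 2 in G, max{deg(u), deg(v)} ≥ n/2, then G is Hamiltonian. -/
/-!
Take a longest path `x 0, …, x (n - 1)`. A Pósa rotation along an edge `x 0 ~ x j` gives the
longest path `x (j - 1), …, x 0, x j, …, x (n - 1)`, and all neighbours of the first vertex of a
longest path lie on it. Suppose every first vertex reachable by rotations is light (degree below
`|V| / 2`). Fan's condition makes two light vertices with a common neighbour adjacent, and this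
forces the neighbours of `x 0` to be exactly `x 1, …, x d`, and the rotation ends
`x 0, …, x (s - 1)` (for `s = d` or `s = d + 1`) to have all their neighbours among
`x 0, …, x s`. So `x s` is a cut vertex unless `|V| ≤ d + 2`, and that contradicts the lightness
of `x 0`, whose degree is at least `d` and at least `2`.

Rotating at one end and then at the other end therefore gives a longest path with two heavy
ends. As in Ore's theorem, their degrees add up to at least `|V|`, which yields a crossing pair
of edges `x 0 ~ x i`, `x (i - 1) ~ x (n - 1)`, hence a cycle through all vertices of the path;
since the path is longest and `G` is connected, that cycle is Hamiltonian.
-/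

open SimpleGraph

/-- `G` is 2-connected: at least 3 vertices and deleting any single vertex leaves
a connected graph. -/
def TwoConnected {V : Type*} [Fintype V] (G : SimpleGraph V) : Prop :=
  3 ≤ Fintype.card V ∧ ∀ v : V, (G.induce {w | w ≠ v}).Connected

section TwoConnected

variable {V : Type*} [Fintype V] {G : SimpleGraph V}

theorem TwoConnected.exists_ne_and_ne (h2 : TwoConnected G) (u v : V) :
    ∃ w, w ≠ u ∧ w ≠ v := by
  classical
  obtain ⟨w, -, hw⟩ := Finset.exists_mem_notMem_of_card_lt_card
    (s := {u, v}) (t := Finset.univ) (Finset.card_le_two.trans_lt h2.1)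
  simp only [Finset.mem_insert, Finset.mem_singleton, not_or] at hw
  exact ⟨w, hw⟩

theorem TwoConnected.reachable_of_ne (h2 : TwoConnected G) {u v w : V} (hu : u ≠ w)
    (hv : v ≠ w) : (G.induce {x | x ≠ w}).Reachable ⟨u, hu⟩ ⟨v, hv⟩ :=
  (h2.2 w).preconnected _ _

theorem TwoConnected.connected (h2 : TwoConnected G) : G.Connected := by
  have : Nonempty V := Fintype.card_pos_iff.1 (by have := h2.1; omega)
  refine ⟨fun u v ↦ ?_⟩
  obtain ⟨w, hwu, hwv⟩ := h2.exists_ne_and_ne u v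
  exact (h2.reachable_of_ne hwu.symm hwv.symm).map (Embedding.induce _).toHom

theorem TwoConnected.exists_adj_ne (h2 : TwoConnected G) {v w : V} (hvw : v ≠ w) :
    ∃ a ≠ w, G.Adj v a := by
  obtain ⟨u, huv, huw⟩ := h2.exists_ne_and_ne v w
  obtain ⟨p⟩ := h2.reachable_of_ne hvw huw
  exact ⟨p.snd, p.snd.2, p.adj_snd (Walk.not_nil_of_ne (by simpa using huv.symm))⟩

theorem TwoConnected.two_le_degree [DecidableRel G.Adj] (h2 : TwoConnected G) (v : V) :
    2 ≤ G.degree v := by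
  classical
  obtain ⟨w, hwv, -⟩ := h2.exists_ne_and_ne v v
  obtain ⟨a, -, ha⟩ := h2.exists_adj_ne hwv.symm
  obtain ⟨b, hba, hb⟩ := h2.exists_adj_ne ha.ne
  rw [← card_neighborFinset_eq_degree]
  exact (Finset.card_pair hba).symm.le.trans
    (Finset.card_le_card (by simp [Finset.insert_subset_iff, ha, hb]))

theorem TwoConnected.insert_eq_univ (h2 : TwoConnected G) {W : Set V} {c : V}
    (hW : W.Nonempty) (hc : c ∉ W) (hclosed : ∀ w ∈ W, ∀ z, G.Adj w z → z ∈ insert c W) :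
    insert c W = Set.univ := by
  refine Set.eq_univ_of_forall fun v ↦ by_contra fun hv ↦ ?_
  obtain ⟨w, hw⟩ := hW
  simp only [Set.mem_insert_iff, not_or] at hv
  obtain ⟨p⟩ := h2.reachable_of_ne (fun h : w = c ↦ hc (h ▸ hw)) hv.1
  obtain ⟨d, -, hd1, hd2⟩ := p.exists_boundary_dart {x | x.1 ∈ W} hw hv.2
  rcases hclosed _ hd1 _ d.adj with h | h
  exacts [d.snd.2 h, hd2 h]

theorem TwoConnected.card_le_succ (h2 : TwoConnected G) {s : ℕ} {x : ℕ → V} (hs0 : 0 < s)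
    (hs : ∀ k < s, x k ≠ x s) (hclosed : ∀ k < s, ∀ z, G.Adj (x k) z → ∃ i ≤ s, x i = z) :
    Fintype.card V ≤ s + 1 := by
  have huniv := h2.insert_eq_univ (W := {v | ∃ k < s, x k = v}) (c := x s) ⟨_, 0, hs0, rfl⟩
    (fun ⟨k, hk, e⟩ ↦ hs k hk e) fun _ ⟨k, hk, hkw⟩ z hz ↦ by
      obtain ⟨i, hi, rfl⟩ := hclosed k hk z (hkw ▸ hz)
      rcases hi.lt_or_eq with hi | rfl
      exacts [.inr ⟨i, hi, rfl⟩, .inl rfl]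
  refine (Finset.card_le_card_of_surjOn x (s := Finset.range (s + 1)) (t := Finset.univ)
    fun v _ ↦ ?_).trans_eq (Finset.card_range _)
  have : v ∈ insert (x s) {v | ∃ k < s, x k = v} := huniv ▸ trivial
  rcases this with rfl | ⟨k, hk, rfl⟩
  exacts [⟨s, by simp, rfl⟩, ⟨k, by simp; omega, rfl⟩]

end TwoConnected

namespace SimpleGraph

variable {V : Type*} {G : SimpleGraph V}

theorem isHamiltonian_of_isChain [Fintype V] [DecidableEq V] {l : List V} (hne : l ≠ [])
    (hl : l.Nodup) (hc : l.IsChain G.Adj) (hcov : ∀ v, v ∈ l) (h3 : 3 ≤ l.length)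
    (hclose : G.Adj (l.getLast hne) (l.head hne)) : G.IsHamiltonian := by
  have hpath : (Walk.ofSupport l hne hc).IsPath := by
    rw [Walk.isPath_def, Walk.support_ofSupport]; exact hl
  refine fun _ ↦ ⟨_, .cons hclose (.ofSupport l hne hc), ?_, ?_⟩
  · rw [Walk.isCycle_iff_isPath_tail_and_le_length]
    simp only [Walk.tail_cons, Walk.length_cons, Walk.length_ofSupport]
    exact ⟨(Walk.isPath_copy _ _ _).2 hpath, by omega⟩
  · simp only [Walk.tail_cons]
    exact ((Walk.isPath_copy _ _ _).2 hpath).isHamiltonian_of_mem (by simpa using hcov)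

/-- The path `x 0, x 1, …, x (n - 1)`; the values of `x` from `n` on play no role. -/
structure IsPathSeq (G : SimpleGraph V) (n : ℕ) (x : ℕ → V) : Prop where
  inj : ∀ {i j}, i < n → j < n → x i = x j → i = j
  adj : ∀ i, i + 1 < n → G.Adj (x i) (x (i + 1))

structure IsLongestPathSeq (G : SimpleGraph V) (n : ℕ) (x : ℕ → V) : Prop
    extends G.IsPathSeq n x where
  le : ∀ m y, G.IsPathSeq m y → m ≤ n

def posaRotation (x : ℕ → V) (j i : ℕ) : V := if i < j then x (j - 1 - i) else x i

theorem posaRotation_of_le {x : ℕ → V} {i j : ℕ} (h : j ≤ i) : posaRotation x j i = x i :=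
  if_neg (by omega)

theorem posaRotation_zero {x : ℕ → V} {j : ℕ} (h : 0 < j) : posaRotation x j 0 = x (j - 1) :=
  if_pos h

namespace IsPathSeq

variable {n : ℕ} {x : ℕ → V}

theorem ne (hx : G.IsPathSeq n x) {i j : ℕ} (hi : i < n) (hj : j < n) (hij : i ≠ j) :
    x i ≠ x j :=
  fun h ↦ hij (hx.inj hi hj h)

theorem adj_sub_one (hx : G.IsPathSeq n x) {i : ℕ} (hi : 0 < i) (hin : i < n) :
    G.Adj (x (i - 1)) (x i) := by
  simpa [Nat.sub_add_cancel hi] using hx.adj (i - 1) (by omega)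

theorem length_le_card [Fintype V] (hx : G.IsPathSeq n x) : n ≤ Fintype.card V := by
  simpa using Finset.card_le_card_of_injOn x (s := Finset.range n) (t := Finset.univ)
    (fun _ _ ↦ Finset.mem_univ _) fun i hi j hj ↦ hx.inj (by simpa using hi) (by simpa using hj)

theorem isHamiltonian [Fintype V] [DecidableEq V] (hx : G.IsPathSeq n x)
    (hcov : ∀ v, ∃ i < n, x i = v) (h3 : 3 ≤ Fintype.card V)
    (hclose : G.Adj (x (n - 1)) (x 0)) : G.IsHamiltonian := by
  have hn : Fintype.card V ≤ n := by
    simpa using Finset.card_le_card_of_surjOn x (s := Finset.range n) (t := Finset.univ)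
      fun v _ ↦ by simpa using hcov v
  have hne : (List.range n).map x ≠ [] := by simp; omega
  refine isHamiltonian_of_isChain hne ?_ ?_ ?_ (by simp; omega) ?_
  · exact List.Nodup.map_on (fun i hi j hj ↦ hx.inj (List.mem_range.1 hi) (List.mem_range.1 hj))
      List.nodup_range
  · exact List.isChain_iff_getElem.2 fun i hi ↦ by simpa using hx.adj i (by simpa using hi)
  · simpa using hcov
  · simpa [List.getLast_map, List.head_map] using hclose

theorem reverse (hx : G.IsPathSeq n x) : G.IsPathSeq n (fun i ↦ x (n - 1 - i)) where
  inj hi hj h := by have := hx.inj (by omega) (by omega) h; omega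
  adj i hi := by
    simpa [show n - 1 - (i + 1) + 1 = n - 1 - i by omega] using
      (hx.adj (n - 1 - (i + 1)) (by omega)).symm

theorem posaRotation (hx : G.IsPathSeq n x) {j : ℕ} (hj : j < n) (h : G.Adj (x 0) (x j)) :
    G.IsPathSeq n (posaRotation x j) where
  inj {a b} ha hb hab := by
    unfold SimpleGraph.posaRotation at hab
    split_ifs at hab <;> have := hx.inj (by omega) (by omega) hab <;> omega
  adj i hi := by
    unfold SimpleGraph.posaRotation
    rcases lt_trichotomy (i + 1) j with hij | rfl | hij
    · rw [if_pos (by omega), if_pos hij]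
      simpa [show j - 1 - (i + 1) + 1 = j - 1 - i by omega] using
        (hx.adj (j - 1 - (i + 1)) (by omega)).symm
    · simpa using h
    · rw [if_neg (by omega), if_neg (by omega)]
      exact hx.adj i hi

theorem rotate (hx : G.IsPathSeq n x) (hclose : G.Adj (x (n - 1)) (x 0)) {j : ℕ} (hj : j < n) :
    G.IsPathSeq n (fun i ↦ if i + j < n then x (i + j) else x (i + j - n)) where
  inj {a b} ha hb hab := by
    split_ifs at hab <;> have := hx.inj (by omega) (by omega) hab <;> omega
  adj i hi := by
    by_cases h1 : i + 1 + j < n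
    · rw [if_pos (by omega), if_pos h1, show i + 1 + j = i + j + 1 by omega]
      exact hx.adj _ (by omega)
    by_cases h2 : i + j < n
    · rw [if_pos h2, if_neg h1, show i + j = n - 1 by omega, show i + 1 + j - n = 0 by omega]
      exact hclose
    · rw [if_neg h2, if_neg h1, show i + 1 + j - n = i + j - n + 1 by omega]
      exact hx.adj _ (by omega)

theorem cons (hx : G.IsPathSeq n x) {z : V} (hz : ∀ i < n, x i ≠ z) (h : G.Adj z (x 0)) :
    G.IsPathSeq (n + 1) (fun i ↦ if i = 0 then z else x (i - 1)) where
  inj {a b} ha hb hab := by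
    split_ifs at hab with h1 h2 h2
    · omega
    · exact absurd hab.symm (hz _ (by omega))
    · exact absurd hab (hz _ (by omega))
    · have := hx.inj (by omega) (by omega) hab; omega
  adj i hi := by
    rcases i with _ | i
    · simpa using h
    · simpa using hx.adj i (by omega)

end IsPathSeq

theorem exists_isLongestPathSeq [Fintype V] {a b : V} (h : G.Adj a b) :
    ∃ n x, 2 ≤ n ∧ G.IsLongestPathSeq n x := by
  classical
  have hb : G.IsPathSeq 1 (fun _ ↦ b) := ⟨fun _ _ _ ↦ by omega, fun _ _ ↦ by omega⟩
  have hab := hb.cons (fun _ _ ↦ h.ne.symm) h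
  obtain ⟨x, hx⟩ := Nat.findGreatest_spec (P := fun n ↦ ∃ x, G.IsPathSeq n x)
    hab.length_le_card ⟨_, hab⟩
  exact ⟨_, x, Nat.le_findGreatest hab.length_le_card ⟨_, hab⟩,
    ⟨hx, fun m y hy ↦ Nat.le_findGreatest hy.length_le_card ⟨y, hy⟩⟩⟩

namespace IsLongestPathSeq

variable {n : ℕ} {x : ℕ → V}

theorem exists_eq_of_adj_zero (hx : G.IsLongestPathSeq n x) {z : V} (h : G.Adj (x 0) z) :
    ∃ i < n, x i = z := by
  by_contra! hz
  have := hx.le _ _ (hx.cons hz h.symm)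
  omega

theorem reverse (hx : G.IsLongestPathSeq n x) :
    G.IsLongestPathSeq n (fun i ↦ x (n - 1 - i)) :=
  ⟨hx.toIsPathSeq.reverse, hx.le⟩

theorem exists_eq_of_adj_last (hx : G.IsLongestPathSeq n x) {z : V}
    (h : G.Adj (x (n - 1)) z) : ∃ i < n, x i = z := by
  obtain ⟨i, hi, rfl⟩ := hx.reverse.exists_eq_of_adj_zero (by simpa using h)
  exact ⟨_, by omega, rfl⟩

theorem exists_eq_of_connected (hx : G.IsLongestPathSeq n x) (hG : G.Connected)
    (hclose : G.Adj (x (n - 1)) (x 0)) (v : V) : ∃ i < n, x i = v := by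
  have hn : 0 < n := Nat.pos_of_ne_zero fun h ↦ by simp [h] at hclose
  by_contra! hv
  obtain ⟨d, -, ⟨j, hj, hjd⟩, hd⟩ :=
    (hG.preconnected (x 0) v).some.exists_boundary_dart {w | ∃ i < n, x i = w} ⟨0, hn, rfl⟩
      (by simpa using hv)
  have := hx.le _ _ ((hx.rotate hclose hj).cons (z := d.snd)
    (fun i hi ↦ by split_ifs <;> exact fun h ↦ hd ⟨_, by omega, h⟩)
    (by simpa [hj, hjd] using d.adj.symm))
  omega

end IsLongestPathSeq

section Heavy

variable [Fintype V] [DecidableRel G.Adj]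

def IsHeavy (G : SimpleGraph V) [DecidableRel G.Adj] (v : V) : Prop :=
  Fintype.card V ≤ 2 * G.degree v

def FanCondition (G : SimpleGraph V) [DecidableRel G.Adj] : Prop :=
  ∀ u v, G.dist u v = 2 → G.IsHeavy u ∨ G.IsHeavy v

theorem FanCondition.adj_of_not_isHeavy (hFan : G.FanCondition) {u v w : V}
    (hu : ¬ G.IsHeavy u) (hv : ¬ G.IsHeavy v) (huv : u ≠ v) (hwu : G.Adj w u)
    (hwv : G.Adj w v) : G.Adj u v := by
  by_contra hnadj
  let p : G.Walk u v := .cons hwu.symm (.cons hwv .nil)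
  have h2 : G.dist u v = 2 :=
    le_antisymm (dist_le p) (Reachable.one_lt_dist_of_ne_of_not_adj ⟨p⟩ huv hnadj)
  exact (hFan u v h2).elim hu hv

theorem exists_crossing_of_le_degree_add {n : ℕ} {x : ℕ → V} (hn : 0 < n)
    (h0 : ∀ z, G.Adj (x 0) z → ∃ i < n, x i = z)
    (h1 : ∀ z, G.Adj (x (n - 1)) z → ∃ i < n, x i = z)
    (hdeg : n ≤ G.degree (x 0) + G.degree (x (n - 1))) :
    ∃ i, 0 < i ∧ i < n ∧ G.Adj (x 0) (x i) ∧ G.Adj (x (n - 1)) (x (i - 1)) := by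
  classical
  set A := {i ∈ Finset.Ico 1 n | G.Adj (x 0) (x i)}
  set B := {i ∈ Finset.Ico 1 n | G.Adj (x (n - 1)) (x (i - 1))}
  have hA : G.degree (x 0) ≤ A.card := by
    refine card_neighborFinset_eq_degree G _ ▸ Finset.card_le_card_of_surjOn x fun z hz ↦ ?_
    obtain ⟨i, hi, rfl⟩ := h0 z ((mem_neighborFinset ..).1 hz)
    have : i ≠ 0 := by rintro rfl; simp at hz
    exact ⟨i, Finset.mem_filter.2 ⟨Finset.mem_Ico.2 ⟨by omega, hi⟩,
      (mem_neighborFinset ..).1 hz⟩, rfl⟩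
  have hB : G.degree (x (n - 1)) ≤ B.card := by
    refine card_neighborFinset_eq_degree G _ ▸
      Finset.card_le_card_of_surjOn (fun i ↦ x (i - 1)) fun z hz ↦ ?_
    obtain ⟨i, hi, rfl⟩ := h1 z ((mem_neighborFinset ..).1 hz)
    have : i ≠ n - 1 := by rintro rfl; simp at hz
    exact ⟨i + 1, Finset.mem_filter.2 ⟨Finset.mem_Ico.2 ⟨by omega, by omega⟩,
      (mem_neighborFinset ..).1 hz⟩, rfl⟩
  obtain ⟨i, hiA, hiB⟩ := Finset.not_disjoint_iff.1 fun hAB ↦ by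
    have : (A ∪ B).card ≤ (Finset.Ico 1 n).card :=
      Finset.card_le_card (Finset.union_subset (Finset.filter_subset ..) (Finset.filter_subset ..))
    rw [Finset.card_union_of_disjoint hAB, Nat.card_Ico] at this
    omega
  simp only [A, B, Finset.mem_filter, Finset.mem_Ico] at hiA hiB
  exact ⟨i, by omega, hiA.1.2, hiA.2, hiB.2⟩

theorem IsLongestPathSeq.isHamiltonian_of_isHeavy [DecidableEq V] {n : ℕ} {x : ℕ → V}
    (hx : G.IsLongestPathSeq n x) (hn : 0 < n) (hG : G.Connected) (h3 : 3 ≤ Fintype.card V)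
    (h0 : G.IsHeavy (x 0)) (h1 : G.IsHeavy (x (n - 1))) : G.IsHamiltonian := by
  have hcard := hx.length_le_card
  obtain ⟨i, hi0, hin, hi, hi'⟩ := exists_crossing_of_le_degree_add hn
    (fun _ ↦ hx.exists_eq_of_adj_zero) (fun _ ↦ hx.exists_eq_of_adj_last)
    (by unfold IsHeavy at h0 h1; omega)
  have hy : G.IsLongestPathSeq n (posaRotation x i) := ⟨hx.posaRotation hin hi, hx.le⟩
  have hclose : G.Adj (posaRotation x i (n - 1)) (posaRotation x i 0) := by
    rwa [posaRotation_of_le (by omega), posaRotation_zero hi0]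
  exact hy.isHamiltonian (hy.exists_eq_of_connected hG hclose) h3 hclose

end Heavy

variable {n : ℕ} {x : ℕ → V}

/-- `u` starts a path on the vertices of `x` which agrees with `x` from position `t` on;
iterated Pósa rotations produce such paths. -/
def IsPosaEnd (G : SimpleGraph V) (n : ℕ) (x : ℕ → V) (t : ℕ) (u : V) : Prop :=
  ∃ y, G.IsPathSeq n y ∧ (∀ i < n, ∃ k < n, y i = x k) ∧ y 0 = u ∧ ∀ i, t ≤ i → y i = x i

namespace IsPosaEnd

variable {t : ℕ} {u : V}

theorem zero (hx : G.IsPathSeq n x) : G.IsPosaEnd n x 0 (x 0) :=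
  ⟨x, hx, fun i hi ↦ ⟨i, hi, rfl⟩, rfl, fun _ _ ↦ rfl⟩

theorem mono (hu : G.IsPosaEnd n x t u) {t' : ℕ} (h : t ≤ t') : G.IsPosaEnd n x t' u :=
  let ⟨y, hy, hyx, hy0, hyt⟩ := hu
  ⟨y, hy, hyx, hy0, fun i hi ↦ hyt i (h.trans hi)⟩

theorem step (hu : G.IsPosaEnd n x t u) {i : ℕ} (hti : t < i) (hin : i < n)
    (h : G.Adj u (x i)) : G.IsPosaEnd n x i (x (i - 1)) := by
  obtain ⟨y, hy, hyx, rfl, hyt⟩ := hu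
  refine ⟨posaRotation y i, hy.posaRotation hin (hyt i hti.le ▸ h), fun k hk ↦ ?_,
    by rw [posaRotation_zero (by omega), hyt _ (by omega)],
    fun k hk ↦ by rw [posaRotation_of_le hk, hyt _ (by omega)]⟩
  unfold posaRotation
  split_ifs
  exacts [hyx _ (by omega), hyx k hk]

theorem exists_eq_of_adj (hu : G.IsPosaEnd n x t u) (hx : G.IsLongestPathSeq n x) {z : V}
    (h : G.Adj u z) : ∃ k < n, x k = z := by
  obtain ⟨y, hy, hyx, rfl, -⟩ := hu
  obtain ⟨i, hi, rfl⟩ := IsLongestPathSeq.exists_eq_of_adj_zero ⟨hy, hx.le⟩ h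
  obtain ⟨k, hk, e⟩ := hyx i hi
  exact ⟨k, hk, e.symm⟩

end IsPosaEnd

section Fan

variable [Fintype V] [DecidableRel G.Adj]

theorem IsPosaEnd.step_and_adj_zero (hFan : G.FanCondition) (hx : G.IsPathSeq n x)
    (hlight : ∀ t u, t < n → G.IsPosaEnd n x t u → ¬ G.IsHeavy u) {k i : ℕ}
    (hk : G.IsPosaEnd n x (k + 1) (x k)) (hk0 : k = 0 ∨ G.Adj (x 0) (x k)) (hki : k + 2 ≤ i)
    (hin : i < n) (h : G.Adj (x k) (x i)) :
    G.IsPosaEnd n x i (x (i - 1)) ∧ G.Adj (x 0) (x (i - 1)) := by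
  have hi := hk.step (by omega) hin h
  have hki' : G.Adj (x k) (x (i - 1)) :=
    hFan.adj_of_not_isHeavy (hlight _ _ (by omega) hk) (hlight _ _ hin hi)
      (hx.ne (by omega) (by omega) (by omega)) h.symm (hx.adj_sub_one (by omega) hin).symm
  refine ⟨hi, ?_⟩
  rcases hk0 with rfl | h0
  · exact hki'
  · exact hFan.adj_of_not_isHeavy (hlight _ _ (by omega) (.zero hx)) (hlight _ _ hin hi)
      (hx.ne (by omega) (by omega) (by omega)) h0.symm hki'

theorem adj_zero_of_le (hFan : G.FanCondition) (hx : G.IsPathSeq n x)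
    (hlight : ∀ t u, t < n → G.IsPosaEnd n x t u → ¬ G.IsHeavy u) {d : ℕ} (hdn : d < n)
    (hd : G.Adj (x 0) (x d)) {j : ℕ} (hj : 1 ≤ j) (hjd : j ≤ d) : G.Adj (x 0) (x j) := by
  refine Nat.decreasingInduction' (fun k hkd hjk hk ↦ ?_) hjd hd
  exact ((IsPosaEnd.zero hx).mono zero_le_one).step_and_adj_zero hFan hx hlight (.inl rfl)
    (by omega) (by omega) hk |>.2

theorem IsPosaEnd.exists_index_le_of_adj (hFan : G.FanCondition) (hx : G.IsLongestPathSeq n x)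
    (hlight : ∀ t u, t < n → G.IsPosaEnd n x t u → ¬ G.IsHeavy u) {d : ℕ}
    (hdmax : ∀ j < n, G.Adj (x 0) (x j) → j ≤ d) {k : ℕ} (hkn : k < n)
    (hk : G.IsPosaEnd n x (k + 1) (x k)) (hk0 : k = 0 ∨ G.Adj (x 0) (x k)) {z : V}
    (h : G.Adj (x k) z) :
    ∃ i < n, x i = z ∧ i ≤ d + 1 ∧ (i = d + 1 → G.IsPosaEnd n x (d + 1) (x d)) := by
  have hkd : k ≤ d := hk0.elim (fun h ↦ h ▸ Nat.zero_le _) (hdmax k hkn)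
  obtain ⟨i, hin, rfl⟩ := hk.exists_eq_of_adj hx h
  refine ⟨i, hin, rfl, ?_⟩
  by_cases hik : i ≤ k + 1
  · refine ⟨by omega, fun hid ↦ ?_⟩
    obtain rfl : k = d := by omega
    exact hk
  · obtain ⟨hi, hi0⟩ := hk.step_and_adj_zero hFan hx.toIsPathSeq hlight hk0 (by omega) hin h
    have := hdmax _ (by omega) hi0
    exact ⟨by omega, fun hid ↦ by simpa [hid] using hi⟩

theorem exists_separating_index (hFan : G.FanCondition) (hx : G.IsLongestPathSeq n x)
    (hlight : ∀ t u, t < n → G.IsPosaEnd n x t u → ¬ G.IsHeavy u) {d : ℕ} (hd1 : 1 ≤ d)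
    (hdn : d < n) (hd : G.Adj (x 0) (x d)) (hdmax : ∀ j < n, G.Adj (x 0) (x j) → j ≤ d) :
    ∃ s, 0 < s ∧ s ≤ d + 1 ∧ s < n ∧ ∀ k < s, ∀ z, G.Adj (x k) z → ∃ i ≤ s, x i = z := by
  have hend : ∀ k < d, G.IsPosaEnd n x (k + 1) (x k) := fun k hk ↦
    (IsPosaEnd.zero hx.toIsPathSeq).step (by omega) (by omega)
      (adj_zero_of_le hFan hx.toIsPathSeq hlight hdn hd (by omega) hk)
  have hend0 : ∀ k ≤ d, k = 0 ∨ G.Adj (x 0) (x k) := fun k hk ↦ by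
    rcases k with _ | k
    · exact .inl rfl
    · exact .inr (adj_zero_of_le hFan hx.toIsPathSeq hlight hdn hd (by omega) hk)
  by_cases hE : G.IsPosaEnd n x (d + 1) (x d) ∧ d + 1 < n
  · refine ⟨d + 1, by omega, le_rfl, hE.2, fun k hk z h ↦ ?_⟩
    have hk' : G.IsPosaEnd n x (k + 1) (x k) := by
      rcases (Nat.lt_succ_iff.1 hk).lt_or_eq with hk | rfl
      exacts [hend k hk, hE.1]
    obtain ⟨i, -, rfl, hi, -⟩ :=
      hk'.exists_index_le_of_adj hFan hx hlight hdmax (by omega) (hend0 k (by omega)) h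
    exact ⟨i, hi, rfl⟩
  · refine ⟨d, by omega, by omega, hdn, fun k hk z h ↦ ?_⟩
    obtain ⟨i, hin, rfl, hi, hid⟩ :=
      (hend k hk).exists_index_le_of_adj hFan hx hlight hdmax (by omega) (hend0 k hk.le) h
    refine ⟨i, ?_, rfl⟩
    by_contra hi'
    exact hE ⟨hid (by omega), by omega⟩

theorem IsLongestPathSeq.exists_isHeavy_zero (h2 : TwoConnected G) (hFan : G.FanCondition)
    (hx : G.IsLongestPathSeq n x) (hn : 2 ≤ n) :
    ∃ y, G.IsLongestPathSeq n y ∧ y (n - 1) = x (n - 1) ∧ G.IsHeavy (y 0) := by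
  by_contra! hall
  have hlight : ∀ t u, t < n → G.IsPosaEnd n x t u → ¬ G.IsHeavy u := by
    rintro t _ htn ⟨y, hy, -, rfl, hyx⟩
    exact hall y ⟨hy, hx.le⟩ (hyx _ (by omega))
  classical
  let d := Nat.findGreatest (fun j ↦ G.Adj (x 0) (x j)) (n - 1)
  have hd1 : 1 ≤ d := Nat.le_findGreatest (by omega) (hx.adj 0 (by omega))
  have hdn : d < n := (Nat.findGreatest_le _).trans_lt (by omega)
  have hd : G.Adj (x 0) (x d) := Nat.findGreatest_spec (P := fun j ↦ G.Adj (x 0) (x j))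
    (m := 1) (by omega) (hx.adj 0 (by omega))
  have hdmax : ∀ j < n, G.Adj (x 0) (x j) → j ≤ d := fun j hj h ↦
    Nat.le_findGreatest (by omega) h
  obtain ⟨s, hs0, hsd, hsn, hclosed⟩ := exists_separating_index hFan hx hlight hd1 hdn hd hdmax
  have hcard := h2.card_le_succ hs0 (fun k hk ↦ hx.ne (i := k) (by omega) hsn hk.ne) hclosed
  have hdeg : d ≤ G.degree (x 0) := by
    rw [← card_neighborFinset_eq_degree]
    refine le_of_eq_of_le (by simp) (Finset.card_le_card_of_injOn x (s := Finset.Icc 1 d)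
      (fun j hj ↦ ?_) fun i hi j hj e ↦ hx.inj ?_ ?_ e)
    · simp only [Finset.coe_Icc, Set.mem_Icc] at hj
      simpa using adj_zero_of_le hFan hx.toIsPathSeq hlight hdn hd hj.1 hj.2
    all_goals simp_all; omega
  have hlight0 := hlight 0 _ (by omega) (.zero hx.toIsPathSeq)
  have hdeg2 := h2.two_le_degree (x 0)
  unfold IsHeavy at hlight0
  omega

end Fan

end SimpleGraph

/-- **Fan's theorem.** -/
theorem fan_hamiltonian {V : Type*} [Fintype V] [DecidableEq V]
    (G : SimpleGraph V) [DecidableRel G.Adj]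
    (h2 : TwoConnected G)
    (hFan : ∀ u v : V, G.dist u v = 2 →
      Fintype.card V ≤ 2 * G.degree u ∨ Fintype.card V ≤ 2 * G.degree v) :
    G.IsHamiltonian := by
  obtain ⟨a, b, hab⟩ : ∃ a b, G.Adj a b := by
    have : Nonempty V := Fintype.card_pos_iff.1 (by have := h2.1; omega)
    let a := Classical.arbitrary V
    exact ⟨a, (G.degree_pos_iff_exists_adj a).1 (by have := h2.two_le_degree a; omega)⟩
  obtain ⟨n, x, hn, hx⟩ := exists_isLongestPathSeq hab
  obtain ⟨y, hy, -, hy0⟩ := hx.exists_isHeavy_zero h2 hFan hn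
  obtain ⟨z, hz, hzn, hz0⟩ := hy.reverse.exists_isHeavy_zero h2 hFan hn
  exact hz.isHamiltonian_of_isHeavy (by omega) h2.connected h2.1 hz0 (by simpa [hzn] using hy0)
end

section
/- Let G be a 2-connected claw-free graph. If |N(u) ∩ N(v)| ≥ 2 for every pair of vertices u, v with distance exactly 2 in G, then G is Hamiltonian. -/
open SimpleGraph

/-- `c, a, b, d` form an induced claw (`K_{1,3}`) in `G` with center `c` and
end-vertices `a`, `b`, `d`. -/
def IsInducedClaw {V : Type*} (G : SimpleGraph V) (c a b d : V) : Prop :=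
  a ≠ b ∧ a ≠ d ∧ b ≠ d ∧
  G.Adj c a ∧ G.Adj c b ∧ G.Adj c d ∧
  ¬G.Adj a b ∧ ¬G.Adj a d ∧ ¬G.Adj b d

/-- `a₁, a₂, a₃, b₁` form an induced copy of `Z₁` in `G`: triangle `a₁a₂a₃` with
pendant edge `a₁b₁`. -/
def IsInducedZ1 {V : Type*} (G : SimpleGraph V) (a1 a2 a3 b1 : V) : Prop :=
  G.Adj a1 a2 ∧ G.Adj a1 a3 ∧ G.Adj a2 a3 ∧ G.Adj a1 b1 ∧
  b1 ≠ a2 ∧ b1 ≠ a3 ∧ ¬G.Adj b1 a2 ∧ ¬G.Adj b1 a3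

/-- `a₁, a₂, a₃, b₁, c₁` form an induced copy of `Z₂` in `G`: triangle `a₁a₂a₃`
with path `a₁b₁c₁` attached at `a₁`. -/
def IsInducedZ2 {V : Type*} (G : SimpleGraph V) (a1 a2 a3 b1 c1 : V) : Prop :=
  G.Adj a1 a2 ∧ G.Adj a1 a3 ∧ G.Adj a2 a3 ∧ G.Adj a1 b1 ∧ G.Adj b1 c1 ∧
  b1 ≠ a2 ∧ b1 ≠ a3 ∧ c1 ≠ a1 ∧ c1 ≠ a2 ∧ c1 ≠ a3 ∧
  ¬G.Adj b1 a2 ∧ ¬G.Adj b1 a3 ∧ ¬G.Adj c1 a1 ∧ ¬G.Adj c1 a2 ∧ ¬G.Adj c1 a3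

/-!
Take a longest cycle `C`. If it misses a vertex, connectivity gives `x ∉ C` adjacent to some
`a ∈ C`; let `b` follow `a` on `C`. If `x ~ b`, insert `x` between `a` and `b`. Otherwise `x` and
`b` are at distance 2, so they have a common neighbour `w ≠ a`. If `w ∉ C`, insert `x, w` between
`a` and `b`. If `w ∈ C`, let `c` follow `w`: if `x ~ c`, insert `x` between `w` and `c`; if not,
the claw at `w` with leaves `x, b, c` forces `b ~ c`, and `x, w`, then `C` backwards from `w` to
`b`, then `C` forwards from `c` to `a`, is a longer cycle. So `C` is Hamiltonian.
-/

namespace Cycle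

variable {α : Type*}

lemma coe_append_comm (l₁ l₂ : List α) : ((l₁ ++ l₂ : List α) : Cycle α) = ↑(l₂ ++ l₁) :=
  coe_eq_coe.2 List.isRotated_append

lemma exists_eq_coe_cons {s : Cycle α} {a : α} (ha : a ∈ s) : ∃ l, s = ↑(a :: l) := by
  obtain ⟨L, rfl⟩ : ∃ L : List α, (L : Cycle α) = s := Quotient.exists_rep s
  obtain ⟨p, q, rfl⟩ := List.append_of_mem (mem_coe_iff.1 ha)
  exact ⟨q ++ p, coe_append_comm p (a :: q)⟩

lemma exists_mem_of_length_pos {s : Cycle α} (hs : 0 < s.length) : ∃ a, a ∈ s := by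
  obtain ⟨L, rfl⟩ : ∃ L : List α, (L : Cycle α) = s := Quotient.exists_rep s
  obtain ⟨a, ha⟩ := List.exists_mem_of_length_pos hs
  exact ⟨a, mem_coe_iff.2 ha⟩

end Cycle

namespace SimpleGraph

variable {V : Type*} {G : SimpleGraph V}

/-- Unlike `Walk.IsCycle`, this allows length `0` and length `2` (an edge). -/
def IsVertexCycle (G : SimpleGraph V) (s : Cycle V) : Prop :=
  s.Nodup ∧ s.Chain G.Adj

lemma isVertexCycle_coe_cons {a : V} {l : List V} :
    G.IsVertexCycle ↑(a :: l) ↔ (a :: l).Nodup ∧ (a :: (l ++ [a])).IsChain G.Adj := by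
  simp [IsVertexCycle]

lemma isVertexCycle_nil : G.IsVertexCycle Cycle.nil := by
  simp [IsVertexCycle]

lemma isVertexCycle_pair {a b : V} (h : G.Adj a b) : G.IsVertexCycle ↑[a, b] := by
  simp [isVertexCycle_coe_cons, h, h.ne, h.symm]

lemma IsVertexCycle.length_le_card [Fintype V] {s : Cycle V} (hs : G.IsVertexCycle s) :
    s.length ≤ Fintype.card V := by
  obtain ⟨L, rfl⟩ : ∃ L : List V, (L : Cycle V) = s := Quotient.exists_rep s
  exact (Cycle.nodup_coe_iff.1 hs.1).length_le_card

lemma IsVertexCycle.length_eq_card [Fintype V] {s : Cycle V} (hs : G.IsVertexCycle s)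
    (hspan : ∀ v, v ∈ s) : s.length = Fintype.card V := by
  classical
  obtain ⟨L, rfl⟩ : ∃ L : List V, (L : Cycle V) = s := Quotient.exists_rep s
  rw [Cycle.length_coe, ← List.toFinset_card_of_nodup (Cycle.nodup_coe_iff.1 hs.1),
    Finset.eq_univ_of_forall fun v => List.mem_toFinset.2 (Cycle.mem_coe_iff.1 (hspan v)),
    Finset.card_univ]

lemma exists_isVertexCycle_forall_length_le [Fintype V] :
    ∃ s, G.IsVertexCycle s ∧ ∀ t, G.IsVertexCycle t → t.length ≤ s.length := by
  classical
  let P n := ∃ s, G.IsVertexCycle s ∧ s.length = n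
  obtain ⟨s, hs, hlen⟩ : P (Nat.findGreatest P (Fintype.card V)) :=
    Nat.findGreatest_spec (Nat.zero_le _) ⟨_, isVertexCycle_nil, Cycle.length_nil⟩
  exact ⟨s, hs, fun t ht => hlen ▸ Nat.le_findGreatest ht.length_le_card ⟨t, ht, rfl⟩⟩

lemma IsVertexCycle.exists_isCycle {s : Cycle V} (hs : G.IsVertexCycle s) (h3 : 3 ≤ s.length) :
    ∃ a, ∃ p : G.Walk a a, p.IsCycle ∧ p.length = s.length := by
  obtain ⟨L, rfl⟩ : ∃ L : List V, (L : Cycle V) = s := Quotient.exists_rep s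
  obtain _ | ⟨a, _ | ⟨b, m⟩⟩ := L
  · simp at h3
  · simp at h3
  rw [isVertexCycle_coe_cons, List.cons_append, List.isChain_cons_cons] at hs
  obtain ⟨hnd, hab, hchain⟩ := hs
  obtain ⟨q, hq⟩ : ∃ q : G.Walk b a, q.support = b :: (m ++ [a]) :=
    ⟨(Walk.ofSupport _ (List.cons_ne_nil _ _) hchain).copy (List.head_cons ..) (by simp),
      by rw [Walk.support_copy, Walk.support_ofSupport]⟩
  have hqpath : q.IsPath := by
    rw [Walk.isPath_def, hq]
    exact (List.perm_append_singleton a (b :: m)).nodup_iff.2 hnd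
  have hqlen : q.length = m.length + 1 := by
    simpa [hq] using q.length_support.symm
  refine ⟨a, .cons hab q, (Walk.cons_isCycle_iff q hab).2 ⟨hqpath, fun he => ?_⟩, by simp [hqlen]⟩
  have := hqpath.length_eq_one_of_mem_edges (Sym2.eq_swap ▸ he)
  simp at h3
  omega

lemma IsVertexCycle.insert {u v : V} {l p : List V} (hs : G.IsVertexCycle ↑(u :: v :: l))
    (hp : (u :: (p ++ [v])).IsChain G.Adj) (hpd : p.Nodup) (hdisj : p.Disjoint (u :: v :: l)) :
    G.IsVertexCycle ↑(u :: (p ++ v :: l)) := by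
  rw [isVertexCycle_coe_cons] at hs ⊢
  refine ⟨List.perm_middle.nodup (hpd.append hs.1 hdisj), ?_⟩
  rw [List.append_assoc, List.cons_append, List.isChain_cons_split]
  exact ⟨hp, (List.isChain_cons_cons.1 hs.2).2⟩

lemma IsVertexCycle.reroute {w c a b x : V} {D A : List V}
    (hs : G.IsVertexCycle ↑(w :: (c :: D ++ a :: b :: A)))
    (hx : x ∉ w :: (c :: D ++ a :: b :: A))
    (hxw : G.Adj x w) (hax : G.Adj a x) (hbc : G.Adj b c) :
    G.IsVertexCycle ↑(x :: (w :: A.reverse ++ b :: c :: D ++ [a])) := by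
  rw [isVertexCycle_coe_cons] at hs ⊢
  obtain ⟨hnd, hchain⟩ := hs
  constructor
  · simp only [List.cons_append, List.nodup_cons, List.nodup_append, List.mem_append,
      List.mem_cons, List.mem_reverse, List.nodup_reverse] at hx hnd ⊢
    grind
  · simp only [List.cons_append, List.append_assoc, List.isChain_cons_cons,
      List.isChain_cons_append_cons_cons] at hchain ⊢
    obtain ⟨-, hcDa, -, hbAw⟩ := hchain
    have hwAb : (w :: (A.reverse ++ [b])).IsChain G.Adj := by
      simpa using List.isChain_reverse.2 (hbAw.imp fun _ _ h => h.symm)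
    exact ⟨hxw, hwAb, hbc, List.isChain_cons_split.2 ⟨hcDa, List.isChain_pair.2 hax⟩⟩

lemma IsVertexCycle.exists_length_lt_of_forall_not_isInducedClaw
    (hclaw : ∀ c a b d : V, ¬IsInducedClaw G c a b d) {w a b x : V} {A B : List V}
    (hs : G.IsVertexCycle ↑(w :: (B ++ a :: b :: A))) (hx : x ∉ w :: (B ++ a :: b :: A))
    (hxw : G.Adj x w) (hax : G.Adj a x) (hwb : G.Adj w b) (hxb : ¬G.Adj x b) :
    ∃ t, G.IsVertexCycle t ∧ (↑(w :: (B ++ a :: b :: A)) : Cycle V).length < t.length := by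
  cases B with
  | nil =>
    exact ⟨_, hs.insert (p := [x]) (by simp [hxw.symm, hax.symm]) (by simp) (by simpa using hx),
      by simp⟩
  | cons c D =>
    rw [List.cons_append] at hs hx ⊢
    have hwc : G.Adj w c := (List.isChain_cons_cons.1 (isVertexCycle_coe_cons.1 hs).2).1
    by_cases hxc : G.Adj x c
    · exact ⟨_, hs.insert (p := [x]) (by simp [hxw.symm, hxc]) (by simp) (by simpa using hx),
        by simp⟩
    have hbc : G.Adj b c := by
      have hnd := (isVertexCycle_coe_cons.1 hs).1
      by_contra hbc
      exact hclaw w x b c ⟨by simp at hx; tauto, by simp at hx; tauto, by simp at hnd; grind,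
        hxw.symm, hwb, hwc, hxb, hxc, hbc⟩
    exact ⟨_, hs.reroute (by simpa using hx) hxw hax hbc, by simp; omega⟩

variable [Fintype V] [DecidableEq V] [DecidableRel G.Adj]

lemma exists_second_common_neighbor
    (hShi : ∀ u v : V, G.dist u v = 2 → 2 ≤ (G.neighborFinset u ∩ G.neighborFinset v).card)
    {a b c : V} (hab : G.Adj a b) (hac : G.Adj a c) (hbc : b ≠ c) (hnbc : ¬G.Adj b c) :
    ∃ w, w ≠ a ∧ G.Adj b w ∧ G.Adj c w := by
  have hdist : G.dist b c = 2 := by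
    let p : G.Walk b c := .cons hab.symm (.cons hac .nil)
    have hle : G.dist b c ≤ 2 := dist_le p
    have h0 : G.dist b c ≠ 0 := (Reachable.dist_eq_zero_iff ⟨p⟩).not.2 hbc
    have h1 : G.dist b c ≠ 1 := dist_eq_one_iff_adj.not.2 hnbc
    omega
  obtain ⟨w, hw, hwa⟩ := Finset.exists_mem_ne (hShi b c hdist) a
  simp only [Finset.mem_inter, mem_neighborFinset] at hw
  exact ⟨w, hwa, hw⟩

lemma IsVertexCycle.exists_length_lt
    (hclaw : ∀ c a b d : V, ¬IsInducedClaw G c a b d)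
    (hShi : ∀ u v : V, G.dist u v = 2 → 2 ≤ (G.neighborFinset u ∩ G.neighborFinset v).card)
    {s : Cycle V} (hs : G.IsVertexCycle s) {a x : V} (ha : a ∈ s) (hx : x ∉ s) (hax : G.Adj a x) :
    ∃ t, G.IsVertexCycle t ∧ s.length < t.length := by
  obtain ⟨_ | ⟨b, l⟩, rfl⟩ := Cycle.exists_eq_coe_cons ha
  · simp [isVertexCycle_coe_cons] at hs
  rw [Cycle.mem_coe_iff] at hx
  have hab : G.Adj a b := (List.isChain_cons_cons.1 (isVertexCycle_coe_cons.1 hs).2).1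
  by_cases hxb : G.Adj x b
  · exact ⟨_, hs.insert (p := [x]) (by simp [hax, hxb]) (by simp) (by simpa using hx),
      by simp⟩
  obtain ⟨w, hwa, hbw, hxw⟩ :=
    exists_second_common_neighbor hShi hab hax (fun h => hx (h ▸ by simp)) (fun h => hxb h.symm)
  by_cases hw : w ∉ a :: b :: l
  · exact ⟨_, hs.insert (p := [x, w]) (by simp [hax, hxw, hbw.symm]) (by simp [hxw.ne])
      (by simp at hx hw ⊢; grind), by simp⟩
  obtain ⟨A, B, rfl⟩ : ∃ A B, l = A ++ w :: B :=
    List.append_of_mem (by simpa [hwa, hbw.ne'] using hw)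
  have hrot : (↑(a :: b :: (A ++ w :: B)) : Cycle V) = ↑(w :: (B ++ a :: b :: A)) := by
    simpa using Cycle.coe_append_comm (a :: b :: A) (w :: B)
  rw [hrot] at hs ⊢
  exact hs.exists_length_lt_of_forall_not_isInducedClaw hclaw (by simp at hx ⊢; tauto)
    hxw hax hbw.symm hxb

lemma IsVertexCycle.forall_mem_of_forall_length_le [Nontrivial V] (hconn : G.Connected)
    (hclaw : ∀ c a b d : V, ¬IsInducedClaw G c a b d)
    (hShi : ∀ u v : V, G.dist u v = 2 → 2 ≤ (G.neighborFinset u ∩ G.neighborFinset v).card)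
    {s : Cycle V} (hs : G.IsVertexCycle s)
    (hmax : ∀ t, G.IsVertexCycle t → t.length ≤ s.length) (v : V) : v ∈ s := by
  by_contra hv
  obtain ⟨v', hvv'⟩ := hconn.preconnected.exists_adj_of_nontrivial v
  obtain ⟨u, hu⟩ := Cycle.exists_mem_of_length_pos
    (lt_of_lt_of_le two_pos (hmax _ (isVertexCycle_pair hvv')))
  obtain ⟨d, -, hdu, hdv⟩ := (hconn.preconnected u v).some.exists_boundary_dart {w | w ∈ s} hu hv
  obtain ⟨t, ht, hlt⟩ := hs.exists_length_lt hclaw hShi hdu hdv d.adj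
  exact (hmax t ht).not_gt hlt

end SimpleGraph

lemma TwoConnected.connected_s3 {V : Type*} [Fintype V] {G : SimpleGraph V} (h : TwoConnected G) :
    G.Connected := by
  classical
  have : Nonempty V := Fintype.card_pos_iff.1 (by have := h.1; omega)
  refine ⟨fun u v => ?_⟩
  obtain ⟨z, -, hz⟩ := Finset.exists_mem_notMem_of_card_lt_card (s := {u, v}) (t := Finset.univ)
    (Finset.card_le_two.trans_lt (by rw [Finset.card_univ]; exact h.1))
  simp only [Finset.mem_insert, Finset.mem_singleton, not_or] at hz
  exact ((h.2 z).preconnected ⟨u, Ne.symm hz.1⟩ ⟨v, Ne.symm hz.2⟩).map (Embedding.induce _).toHom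

/-- **Shi's theorem.** A 2-connected claw-free graph in which every pair of
vertices at distance 2 has at least two common neighbors is Hamiltonian. -/
theorem shi_hamiltonian {V : Type*} [Fintype V] [DecidableEq V]
    (G : SimpleGraph V) [DecidableRel G.Adj]
    (h2 : TwoConnected G)
    (hclaw : ∀ c a b d : V, ¬IsInducedClaw G c a b d)
    (hShi : ∀ u v : V, G.dist u v = 2 →
      2 ≤ (G.neighborFinset u ∩ G.neighborFinset v).card) :
    G.IsHamiltonian := by
  intro _
  have : Nontrivial V := Fintype.one_lt_card_iff_nontrivial.1 (by have := h2.1; omega)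
  obtain ⟨s, hs, hmax⟩ := G.exists_isVertexCycle_forall_length_le
  have hcard : s.length = Fintype.card V :=
    hs.length_eq_card (hs.forall_mem_of_forall_length_le h2.connected_s3 hclaw hShi hmax)
  obtain ⟨a, p, hp, hlen⟩ := hs.exists_isCycle (hcard ▸ h2.1)
  exact ⟨a, p, Walk.isHamiltonianCycle_iff_isCycle_and_length_eq.2 ⟨hp, hlen.trans hcard⟩⟩
end

section
/- Let G be a graph on n vertices. Define the Ore-edge set Ẽ(G) = {xy : xy ∈ E(G), or deg(x) + deg(y) ≥ n with x ≠ y}. If C' = v_1 v_2 ... v_k v_1 is a sequence of vertices with v_i v_{i+1} ∈ Ẽ(G) for all i (indices mod k), then there exists an actual cycle C of G with V(C') ⊆ V(C). -/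
open SimpleGraph

/-- `{x, y}` is an Ore-edge of `G`: either an actual edge, or a pair of distinct
vertices with degree sum at least `n`. -/
def OreEdge {V : Type*} [Fintype V] (G : SimpleGraph V) [DecidableRel G.Adj]
    (x y : V) : Prop :=
  x ≠ y ∧ (G.Adj x y ∨ Fintype.card V ≤ G.degree x + G.degree y)

/-!
Induction on the number of consecutive pairs of the Ore-cycle that are not edges of `G`.
Rotate the cycle so that such a pair `y x` closes it, and let `x ⋯ y` be the remaining path.
If `x` and `y` have a common neighbour `z` off the path, `x ⋯ y z x` is an Ore-cycle with one
non-edge less. Otherwise, counting neighbours of `x` and `y` on and off the path against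
`deg x + deg y ≥ n` (the argument of Ore's theorem) gives consecutive path vertices `a b` with
`a ~ y` and `b ~ x`, and `x ⋯ a y ⋯ b x` again has fewer non-edges.
-/

namespace List

variable {α : Type*} (r : α → α → Prop) [DecidableRel r]

def chainDefect : List α → ℕ
  | a :: b :: l => (if r a b then 0 else 1) + chainDefect (b :: l)
  | _ => 0

variable {r}

@[simp]
theorem chainDefect_nil : chainDefect r [] = 0 := rfl

@[simp]
theorem chainDefect_singleton (a : α) : chainDefect r [a] = 0 := rfl

@[simp]
theorem chainDefect_cons_cons (a b : α) (l : List α) :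
    chainDefect r (a :: b :: l) = (if r a b then 0 else 1) + chainDefect r (b :: l) := rfl

theorem chainDefect_append : ∀ l₁ l₂ : List α, chainDefect r (l₁ ++ l₂) =
    chainDefect r l₁ + chainDefect r (l₁.getLast?.toList ++ l₂.head?.toList) +
      chainDefect r l₂
  | [], l₂ => by cases l₂ <;> simp
  | [a], l₂ => by cases l₂ <;> simp
  | a :: b :: l₁, l₂ => by
    change chainDefect r (a :: b :: (l₁ ++ l₂)) = _
    rw [chainDefect_cons_cons, ← cons_append, chainDefect_append (b :: l₁),
      chainDefect_cons_cons, getLast?_cons_cons]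
    omega

theorem chainDefect_reverse [Std.Symm r] :
    ∀ l : List α, chainDefect r l.reverse = chainDefect r l
  | [] => rfl
  | a :: l => by
    rw [reverse_cons, chainDefect_append, chainDefect_reverse l]
    conv_rhs => rw [← singleton_append, chainDefect_append]
    cases l <;> simp [Std.Symm.iff, Nat.add_comm]

theorem chainDefect_append_take_one_comm (l₁ l₂ : List α) :
    chainDefect r (l₁ ++ l₂ ++ (l₁ ++ l₂).take 1) =
      chainDefect r (l₂ ++ l₁ ++ (l₂ ++ l₁).take 1) := by
  have split : ∀ (a b : α) l₁ l₂,
      chainDefect r (a :: l₁ ++ b :: l₂ ++ (a :: l₁ ++ b :: l₂).take 1) =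
        chainDefect r (a :: l₁ ++ [b]) + chainDefect r (b :: l₂ ++ [a]) := by
    intro a b l₁ l₂
    rw [cons_append, take_succ_cons, take_zero, ← cons_append, append_assoc, chainDefect_append,
      chainDefect_append (a :: l₁) [b]]
    simp
  rcases l₁ with _ | ⟨a, l₁⟩
  · simp
  rcases l₂ with _ | ⟨b, l₂⟩
  · simp
  rw [split, split, Nat.add_comm]

variable {p q : α → Prop} [DecidablePred p] [DecidablePred q]

theorem countP_dropLast_add_countP_tail_le :
    ∀ {l : List α}, l.IsChain (fun a b => ¬ (p a ∧ q b)) →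
      (l.dropLast.countP fun a => p a) + (l.tail.countP fun a => q a) ≤ l.length - 1
  | [], _ | [_], _ => by simp
  | a :: b :: l, h => by
    rw [isChain_cons_cons] at h
    have ih := countP_dropLast_add_countP_tail_le h.2
    simp only [dropLast_cons_cons, tail_cons, length_cons, countP_cons] at ih ⊢
    by_cases ha : p a <;> by_cases hb : q b <;> simp_all <;> omega

end List

namespace Cycle

variable {α : Type*} {r : α → α → Prop}

theorem chain_coe_iff (l : List α) :
    Chain r ↑l ↔ l.IsChain r ∧ ∀ a ∈ l.getLast?, ∀ b ∈ l.head?, r a b := by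
  cases l with
  | nil => simp
  | cons x t => rw [chain_coe_cons, ← List.cons_append, List.isChain_append]; simp

theorem exists_eq_coe_cons_append_of_not_chain {s : Cycle α} (hs : 2 ≤ s.length)
    (h : ¬ s.Chain r) : ∃ x y M, s = ↑(x :: (M ++ [y])) ∧ ¬ r y x := by
  induction s with
  | nil => simp at hs
  | cons x t _ => ?_
  obtain rfl | ⟨M, y, rfl⟩ := t.eq_nil_or_concat
  · simp at hs
  rw [List.concat_eq_append] at h ⊢
  by_cases hyx : r y x
  · have : ¬ (x :: (M ++ [y])).IsChain r := fun hc =>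
      h ((chain_coe_iff _).2 ⟨hc, by simpa [List.getLast?_cons] using hyx⟩)
    simp only [List.isChain_iff_forall_rel_of_append_cons_cons, not_forall] at this
    obtain ⟨a, b, A, B, heq, hab⟩ := this
    refine ⟨b, a, B ++ A, ?_, hab⟩
    rw [heq]
    exact coe_eq_coe.2 (by simpa using List.isRotated_append (l := A ++ [a]) (l' := b :: B))
  · exact ⟨x, y, M, rfl, hyx⟩

variable (r) [DecidableRel r]

def chainDefect (s : Cycle α) : ℕ :=
  Quotient.liftOn' s (fun l => (l ++ l.take 1).chainDefect r) fun l₁ _ ⟨n, h⟩ => by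
    subst h
    rw [List.rotate_eq_drop_append_take_mod, ← List.chainDefect_append_take_one_comm,
      List.take_append_drop]

variable {r}

theorem chainDefect_coe (l : List α) : chainDefect r ↑l =
    l.chainDefect r + (l.getLast?.toList ++ l.head?.toList).chainDefect r := by
  change (l ++ l.take 1).chainDefect r = _
  rw [List.chainDefect_append]
  cases l <;> simp

end Cycle

namespace SimpleGraph

variable {V : Type*} {G : SimpleGraph V}

theorem exists_isCycle_support_eq {x : V} {t : List V} (hnd : (x :: t).Nodup)
    (ht : 2 ≤ t.length) (h : (x :: (t ++ [x])).IsChain G.Adj) :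
    ∃ C : G.Walk x x, C.IsCycle ∧ C.support = x :: (t ++ [x]) := by
  obtain ⟨C, hsupp⟩ : ∃ C : G.Walk x x, C.support = x :: (t ++ [x]) := by
    let W := Walk.ofSupport (x :: (t ++ [x])) (List.cons_ne_nil _ _) h
    refine ⟨W.copy (List.head_cons ..) (by simp), ?_⟩
    rw [Walk.support_copy, Walk.support_ofSupport]
  have hlen : C.length = t.length + 1 := by simpa using congrArg List.length hsupp
  refine ⟨C, Walk.isCycle_iff_isPath_tail_and_le_length.2 ⟨?_, by omega⟩, hsupp⟩
  have hnil : ¬ C.Nil := by simp [← Walk.length_eq_zero_iff, hlen]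
  rw [Walk.isPath_def, Walk.support_tail_of_not_nil _ hnil, hsupp]
  exact (List.perm_append_singleton x t).nodup_iff.2 hnd

theorem exists_isCycle_of_chain_adj {s : Cycle V} (hs : s.Nodup) (h3 : 3 ≤ s.length)
    (h : s.Chain G.Adj) :
    ∃ u, ∃ C : G.Walk u u, C.IsCycle ∧ ∀ v ∈ s, v ∈ C.support := by
  induction s with
  | nil => simp at h3
  | cons x t _ => ?_
  obtain ⟨C, hC, hsupp⟩ := exists_isCycle_support_eq (Cycle.nodup_coe_iff.1 hs)
    (by simpa using h3) ((Cycle.chain_coe_cons _ _ _).1 h)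
  refine ⟨x, C, hC, fun v hv => ?_⟩
  rw [hsupp]
  simp only [Cycle.mem_coe_iff, List.mem_cons, List.mem_append] at hv ⊢
  tauto

end SimpleGraph

section OreCycle

variable {V : Type*} [Fintype V] {G : SimpleGraph V} [DecidableRel G.Adj] {x y : V}

namespace OreEdge

theorem symm (h : OreEdge G x y) : OreEdge G y x :=
  ⟨h.1.symm, h.2.imp Adj.symm fun h => by omega⟩

theorem of_adj (h : G.Adj x y) : OreEdge G x y :=
  ⟨h.ne, .inl h⟩

theorem card_le_degree_add_degree (h : OreEdge G x y) (hxy : ¬ G.Adj x y) :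
    Fintype.card V ≤ G.degree x + G.degree y :=
  h.2.resolve_left hxy

end OreEdge

namespace SimpleGraph

theorem degree_eq_countP_add_card_sdiff [DecidableEq V] {l : List V} (hl : l.Nodup) (v : V) :
    G.degree v = (l.countP fun w => G.Adj v w) + (G.neighborFinset v \ l.toFinset).card := by
  rw [← card_neighborFinset_eq_degree, ← Finset.card_inter_add_card_sdiff _ l.toFinset,
    List.countP_eq_length_filter, ← List.toFinset_card_of_nodup (hl.filter _)]
  congr 2
  ext w
  simp [and_comm]

theorem exists_crossing_of_card_le_degree_add_degree {M : List V}
    (hnd : (x :: (M ++ [y])).Nodup) (hdeg : Fintype.card V ≤ G.degree x + G.degree y)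
    (hout : ∀ z ∉ x :: (M ++ [y]), ¬ (G.Adj x z ∧ G.Adj y z)) :
    ∃ A a b B, x :: (M ++ [y]) = A ++ a :: b :: B ∧ G.Adj y a ∧ G.Adj x b := by
  classical
  by_contra hcross
  generalize hl : x :: (M ++ [y]) = l at hnd hout hcross
  have hinside :
      (l.countP fun w => G.Adj y w) + (l.countP fun w => G.Adj x w) ≤ l.length - 1 := by
    have hchain : l.IsChain fun a b => ¬ (G.Adj y a ∧ G.Adj x b) :=
      List.isChain_iff_forall_rel_of_append_cons_cons.2 fun a b A B h hc =>
        hcross ⟨A, a, b, B, h, hc⟩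
    have := List.countP_dropLast_add_countP_tail_le hchain
    simpa [← hl, List.countP_cons, List.dropLast_cons_of_ne_nil] using this
  have houtside : (G.neighborFinset x \ l.toFinset).card +
      (G.neighborFinset y \ l.toFinset).card ≤ Fintype.card V - l.length := by
    have hdisj : Disjoint (G.neighborFinset x \ l.toFinset) (G.neighborFinset y \ l.toFinset) := by
      rw [Finset.disjoint_left]
      intro z hzx hzy
      simp only [Finset.mem_sdiff, mem_neighborFinset, List.mem_toFinset] at hzx hzy
      exact hout z hzx.2 ⟨hzx.1, hzy.1⟩
    rw [← Finset.card_union_of_disjoint hdisj, ← List.toFinset_card_of_nodup hnd,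
      ← Finset.card_compl]
    exact Finset.card_le_card (Finset.union_subset (by intro z; simp) (by intro z; simp))
  have hlen : l.length ≤ Fintype.card V := by
    rw [← List.toFinset_card_of_nodup hnd]
    exact Finset.card_le_univ _
  have hpos : 0 < l.length := by simp [← hl]
  rw [degree_eq_countP_add_card_sdiff hnd x, degree_eq_countP_add_card_sdiff hnd y] at hdeg
  omega

variable (G) in
structure IsOreCycle (s : Cycle V) : Prop where
  nodup : s.Nodup
  three_le_length : 3 ≤ s.length
  chain : s.Chain (OreEdge G)

namespace IsOreCycle

theorem append_common_neighbor {l : List V} {z : V} (h : G.IsOreCycle ↑l)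
    (hx : l.head? = some x) (hy : l.getLast? = some y) (hz : z ∉ l)
    (hxz : G.Adj x z) (hyz : G.Adj y z) (hyx : ¬ G.Adj y x) :
    G.IsOreCycle ↑(l ++ [z]) ∧
      Cycle.chainDefect G.Adj ↑(l ++ [z]) < Cycle.chainDefect G.Adj ↑l := by
  have hchain := (Cycle.chain_coe_iff l).1 h.chain
  refine ⟨⟨?_, ?_, ?_⟩, ?_⟩
  · have := Cycle.nodup_coe_iff.1 h.nodup
    rw [Cycle.nodup_coe_iff, List.nodup_append]
    refine ⟨this, List.nodup_singleton z, ?_⟩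
    rintro a ha b hb rfl
    exact hz (List.mem_singleton.1 hb ▸ ha)
  · have := h.three_le_length
    simp at this ⊢
    omega
  · rw [Cycle.chain_coe_iff]
    refine ⟨hchain.1.append (.singleton z) ?_, by simpa [hx] using (OreEdge.of_adj hxz).symm⟩
    simpa [hy] using OreEdge.of_adj hyz
  · rw [Cycle.chainDefect_coe, Cycle.chainDefect_coe, List.chainDefect_append]
    simp [hx, hy, hyx, hyz, hxz.symm]

theorem append_reverse {T D : List V} {a b : V} (h : G.IsOreCycle ↑(T ++ D))
    (hx : T.head? = some x) (ha : T.getLast? = some a) (hb : D.head? = some b)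
    (hy : D.getLast? = some y) (hay : G.Adj a y) (hbx : G.Adj b x) (hyx : ¬ G.Adj y x) :
    G.IsOreCycle ↑(T ++ D.reverse) ∧
      Cycle.chainDefect G.Adj ↑(T ++ D.reverse) < Cycle.chainDefect G.Adj ↑(T ++ D) := by
  have hperm : (T ++ D.reverse).Perm (T ++ D) := (List.reverse_perm D).append_left T
  have hchain := List.isChain_append.1 ((Cycle.chain_coe_iff _).1 h.chain).1
  refine ⟨⟨?_, ?_, ?_⟩, ?_⟩
  · exact Cycle.nodup_coe_iff.2 (hperm.nodup_iff.2 (Cycle.nodup_coe_iff.1 h.nodup))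
  · simpa [hperm.length_eq] using h.three_le_length
  · rw [Cycle.chain_coe_iff]
    refine ⟨hchain.1.append ?_ ?_, ?_⟩
    · exact List.isChain_reverse.2 (hchain.2.1.imp fun _ _ => OreEdge.symm)
    · simpa [ha, hy] using OreEdge.of_adj hay
    · simpa [hx, hb] using OreEdge.of_adj hbx
  · have : Std.Symm G.Adj := G.symm
    have := List.chainDefect_reverse (r := G.Adj) D
    rw [Cycle.chainDefect_coe, Cycle.chainDefect_coe, List.chainDefect_append T D,
      List.chainDefect_append T D.reverse]
    simp [hx, ha, hb, hy, hay, hbx, hyx]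
    omega

theorem exists_chainDefect_lt {M : List V} (h : G.IsOreCycle ↑(x :: (M ++ [y])))
    (hyx : ¬ G.Adj y x) : ∃ s, G.IsOreCycle s ∧ (∀ v ∈ x :: (M ++ [y]), v ∈ s) ∧
      s.chainDefect G.Adj < Cycle.chainDefect G.Adj ↑(x :: (M ++ [y])) := by
  have hx : (x :: (M ++ [y])).head? = some x := rfl
  have hy : (x :: (M ++ [y])).getLast? = some y := by simp [List.getLast?_cons]
  have hdeg : Fintype.card V ≤ G.degree x + G.degree y :=
    (((Cycle.chain_coe_iff _).1 h.chain).2 y hy x hx).symm.card_le_degree_add_degree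
      fun hxy => hyx hxy.symm
  by_cases hcommon : ∃ z ∉ x :: (M ++ [y]), G.Adj x z ∧ G.Adj y z
  · obtain ⟨z, hz, hxz, hyz⟩ := hcommon
    obtain ⟨h', hlt⟩ := h.append_common_neighbor hx hy hz hxz hyz hyx
    exact ⟨_, h', fun v hv => Cycle.mem_coe_iff.2 (List.mem_append_left _ hv), hlt⟩
  · obtain ⟨A, a, b, B, hsplit, hya, hxb⟩ := exists_crossing_of_card_le_degree_add_degree
      (Cycle.nodup_coe_iff.1 h.nodup) hdeg fun z hz hc => hcommon ⟨z, hz, hc⟩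
    have hTD : x :: (M ++ [y]) = (A ++ [a]) ++ (b :: B) := by simp [hsplit]
    rw [hTD] at h hx hy ⊢
    obtain ⟨h', hlt⟩ := h.append_reverse (by simpa using hx) (by simp) rfl (by simpa using hy)
      hya.symm hxb.symm hyx
    refine ⟨_, h', fun v hv => ?_, hlt⟩
    rw [Cycle.mem_coe_iff, List.mem_append, List.mem_reverse]
    exact List.mem_append.1 hv

theorem exists_isCycle {s : Cycle V} (h : G.IsOreCycle s) :
    ∃ u, ∃ C : G.Walk u u, C.IsCycle ∧ ∀ v ∈ s, v ∈ C.support := by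
  induction hd : s.chainDefect G.Adj using Nat.strong_induction_on generalizing s with
  | _ d ih =>
  by_cases hadj : s.Chain G.Adj
  · exact exists_isCycle_of_chain_adj h.nodup h.three_le_length hadj
  obtain ⟨x, y, M, rfl, hyx⟩ :=
    Cycle.exists_eq_coe_cons_append_of_not_chain (by have := h.three_le_length; omega) hadj
  obtain ⟨s, hs, hsub, hlt⟩ := h.exists_chainDefect_lt hyx
  obtain ⟨u, C, hC, hmem⟩ := ih _ (hd ▸ hlt) hs rfl
  exact ⟨u, C, hC, fun v hv => hmem v (hsub v (Cycle.mem_coe_iff.1 hv))⟩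

end IsOreCycle

end SimpleGraph

end OreCycle

theorem ore_cycle_to_cycle_general {V : Type*} [Fintype V]
    (G : SimpleGraph V) [DecidableRel G.Adj]
    (k : ℕ) (hk : 3 ≤ k)
    (f : ZMod k → V) (hinj : Function.Injective f)
    (hore : ∀ i : ZMod k, OreEdge G (f i) (f (i + 1))) :
    ∃ (u : V) (C : G.Walk u u), C.IsCycle ∧ ∀ i : ZMod k, f i ∈ C.support := by
  obtain ⟨n, rfl⟩ : ∃ n, k = n + 1 := ⟨k - 1, by omega⟩
  set l := (List.range (n + 1)).map fun i : ℕ => f i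
  have hl : G.IsOreCycle ↑l := by
    refine ⟨?_, by simpa [l] using hk, ?_⟩
    · refine Cycle.nodup_coe_iff.2 (List.nodup_range.map_on fun i hi j hj hij => ?_)
      simpa [ZMod.val_cast_of_lt (List.mem_range.1 hi), ZMod.val_cast_of_lt (List.mem_range.1 hj)]
        using congrArg ZMod.val (hinj hij)
    · rw [← Cycle.map_coe, Cycle.chain_map, Cycle.chain_range_succ]
      refine ⟨by simpa using hore n, fun m _ => by simpa using hore m⟩
  obtain ⟨u, C, hC, hmem⟩ := hl.exists_isCycle
  refine ⟨u, C, hC, fun i => hmem _ (Cycle.mem_coe_iff.2 (List.mem_map.2 ⟨i.val, ?_, ?_⟩))⟩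
  · exact List.mem_range.2 (ZMod.val_lt i)
  · simp

/-- **Li–Ryjáček–Wang–Zhang lemma.** If `v₁ v₂ … v_k v₁` is an Ore-cycle of `G`
(distinct vertices, consecutive ones joined by Ore-edges, indices mod `k`),
then `G` has an actual cycle containing all the vertices `v₁, …, v_k`. -/
theorem ore_cycle_to_cycle {V : Type*} [Fintype V] [DecidableEq V]
    (G : SimpleGraph V) [DecidableRel G.Adj]
    (k : ℕ) (hk : 3 ≤ k)
    (f : ZMod k → V) (hinj : Function.Injective f)
    (hore : ∀ i : ZMod k, OreEdge G (f i) (f (i + 1))) :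
    ∃ (u : V) (C : G.Walk u u), C.IsCycle ∧ ∀ i : ZMod k, f i ∈ C.support :=
  ore_cycle_to_cycle_general G k hk f hinj hore
end

section
/- Let G be a non-Hamiltonian graph on n vertices, C a longest cycle of G with a fixed orientation, R a connected component of G − V(C), and A the set of vertices on C having a neighbor in R. Then for every u ∈ R and every v ∈ A, neither {u, v⁻} nor {u, v⁺} belongs to Ẽ(G), where v⁻ and v⁺ are the predecessor and successor of v on C and Ẽ(G) = {xy : xy ∈ E(G) or deg(x)+deg(y) ≥ n}. -/
/-!
Normalise by rotating or reflecting the cycle so that `v = f 0` has a neighbour `x ∈ R`; the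
claim is then about `f 1`. If `u ∈ R` is adjacent to `f j` with `j ≠ 0`, then `f 1` is not
adjacent to `f (j + 1)`: otherwise `f 0, x, …, u, f j, f (j - 1), …, f 1, f (j + 1), …, f 0`,
with `x ⋯ u` a path inside `R`, is a cycle longer than `C`. Taking `j = 1` shows that `f 1` has
no neighbour in `R`. So with `J = {j | u ~ f j}` and `S = R ∪ f (J + 1)`, the neighbourhood of
`u` lies in `(R \ {u}) ∪ f J`, which is smaller than `S`, while that of `f 1` misses `S`; hence
`deg u + deg (f 1) < n`.
-/

open SimpleGraph

/-- The cycle `C = f 0, f 1, …, f (m-1), f 0` in `G`, with the orientation given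
by increasing indices (so `f (i+1)` is the successor and `f (i-1)` the
predecessor of `f i` on `C`). -/
def IsCycleEmbedding {V : Type*} (G : SimpleGraph V) (m : ℕ) (f : ZMod m → V) : Prop :=
  3 ≤ m ∧ Function.Injective f ∧ ∀ i : ZMod m, G.Adj (f i) (f (i + 1))

/-- `f` describes a longest cycle of `G` (of length `m`). -/
def IsLongestCycle {V : Type*} (G : SimpleGraph V) (m : ℕ) (f : ZMod m → V) : Prop :=
  IsCycleEmbedding G m f ∧
  ∀ (u : V) (C : G.Walk u u), C.IsCycle → C.length ≤ m

/-- `R` is a connected component of `G - V(C)`, where `C` is the cycle given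
by `f`: `R` is a nonempty set of vertices off `C`, connected in the induced
subgraph, and closed under adjacency to vertices off `C`. -/
def IsComponentOutside {V : Type*} (G : SimpleGraph V) (m : ℕ) (f : ZMod m → V)
    (R : Set V) : Prop :=
  R.Nonempty ∧ (∀ x ∈ R, x ∉ Set.range f) ∧ (G.induce R).Connected ∧
  ∀ x ∈ R, ∀ y : V, G.Adj x y → y ∉ Set.range f → y ∈ R

theorem ZMod.natCast_injOn_Icc_one (m : ℕ) :
    Set.InjOn (Nat.cast : ℕ → ZMod m) (Set.Icc 1 m) := by
  rintro a ⟨ha₁, ha₂⟩ b ⟨hb₁, hb₂⟩ h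
  refine ((ZMod.natCast_eq_natCast_iff _ _ _).1 h).eq_of_abs_lt ?_
  rw [abs_lt]
  constructor <;> omega

namespace SimpleGraph

variable {V : Type*} {G : SimpleGraph V}

def seqWalk {g : ℕ → V} (hg : ∀ t, G.Adj (g t) (g (t + 1))) (a : ℕ) :
    (k : ℕ) → G.Walk (g a) (g (a + k))
  | 0 => Walk.nil
  | k + 1 => (seqWalk hg a k).concat (hg (a + k))

variable {g : ℕ → V} (hg : ∀ t, G.Adj (g t) (g (t + 1)))

@[simp] theorem length_seqWalk (a k : ℕ) : (seqWalk hg a k).length = k := by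
  induction k with
  | zero => rfl
  | succ k ih => simp [seqWalk, ih]

theorem support_seqWalk (a k : ℕ) :
    (seqWalk hg a k).support = (List.range' a (k + 1)).map g := by
  induction k with
  | zero => rfl
  | succ k ih => rw [seqWalk, Walk.support_concat, ih, List.range'_1_concat (n := k + 1)]; simp

theorem support_seqWalk_chord_perm (a k l : ℕ) (h : G.Adj (g a) (g (a + k + 1))) :
    ((seqWalk hg a k).reverse.append (.cons h (seqWalk hg (a + k + 1) l))).support.Perm
      ((List.range' a (k + l + 2)).map g) := by
  rw [Walk.support_append, Walk.support_reverse, Walk.support_cons, List.tail_cons,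
    support_seqWalk, support_seqWalk]
  refine ((List.reverse_perm _).append_right _).trans (.of_eq ?_)
  rw [← List.map_append, Nat.add_assoc a k 1, List.range'_append_1]
  congr 2
  omega

theorem degree_add_degree_lt_card [Fintype V] [DecidableRel G.Adj] {u v : V}
    (S : Finset V) (hu : G.degree u < S.card) (hv : Disjoint (G.neighborFinset v) S) :
    G.degree u + G.degree v < Fintype.card V := by
  classical
  have := (Finset.card_union_of_disjoint hv).symm.trans_le (Finset.card_le_univ _)
  rw [card_neighborFinset_eq_degree] at this
  omega

end SimpleGraph

section LongestCycle

variable {V : Type*} {G : SimpleGraph V} {m : ℕ} {f : ZMod m → V} {R : Set V}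

theorem IsCycleEmbedding.exists_isCycle_of_crossing (hf : IsCycleEmbedding G m f)
    {x u : V} (P : G.Walk x u) (hP : P.IsPath) (hPf : ∀ z ∈ P.support, z ∉ Set.range f)
    (hx : G.Adj (f 0) x) {j : ZMod m} (hj : j ≠ 0) (hu : G.Adj u (f j))
    (h1 : G.Adj (f 1) (f (j + 1))) :
    ∃ (w : V) (c : G.Walk w w), c.IsCycle ∧ m < c.length := by
  obtain ⟨hm, hinj, hadj⟩ := hf
  have : NeZero m := ⟨by omega⟩
  -- indexing the cycle by `ℕ` makes `f 0 = g m` the end of the arc `g (k + 2), …, g m`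
  set g : ℕ → V := fun t => f t
  have hg : ∀ t, G.Adj (g t) (g (t + 1)) := fun t => by simpa [g] using hadj t
  obtain ⟨k, hk⟩ := Nat.exists_eq_add_one_of_ne_zero ((ZMod.val_ne_zero j).2 hj)
  obtain ⟨l, hl⟩ : ∃ l, m = k + l + 2 := ⟨m - k - 2, by have := j.val_lt; omega⟩
  have hkj : (1 + k : ZMod m) = j := by
    rw [← ZMod.natCast_zmod_val j, hk]
    push_cast
    ring
  have hu' : G.Adj u (g (1 + k)) := by simpa [g, hkj] using hu
  have h1' : G.Adj (g 1) (g (1 + k + 1)) := by simpa [g, hkj] using h1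
  have hx' : G.Adj (g (1 + k + 1 + l)) x := by simpa [g, show 1 + k + 1 + l = m by omega] using hx
  let W := (seqWalk hg 1 k).reverse.append (.cons h1' (seqWalk hg (1 + k + 1) l))
  have hW : W.support.Perm ((List.range' 1 m).map g) :=
    hl ▸ support_seqWalk_chord_perm hg 1 k l h1'
  have hWf : ∀ z ∈ W.support, z ∈ Set.range f := fun z hz => by
    obtain ⟨t, -, rfl⟩ := List.mem_map.1 (hW.mem_iff.1 hz)
    exact ⟨_, rfl⟩
  have hWpath : W.support.Nodup :=
    hW.nodup_iff.2 <| (List.nodup_range' (s := 1) (n := m)).map_on fun a ha b hb hab =>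
      ZMod.natCast_injOn_Icc_one m (by simp at ha ⊢; omega) (by simp at hb ⊢; omega) (hinj hab)
  let Q := P.append (.cons hu' W)
  have hQ : Q.IsPath := by
    rw [Walk.isPath_def, Walk.support_append, Walk.support_cons, List.tail_cons,
      List.nodup_append]
    exact ⟨hP.support_nodup, hWpath, fun a ha b hb hab => hPf a ha (hab ▸ hWf b hb)⟩
  refine ⟨_, .cons hx' Q, (Walk.cons_isCycle_iff Q hx').2 ⟨hQ, fun he => ?_⟩, ?_⟩
  · have := hQ.length_eq_one_of_mem_edges (Sym2.eq_swap ▸ he)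
    simp only [Q, W, Walk.length_append, Walk.length_cons, Walk.length_reverse,
      length_seqWalk] at this
    omega
  · simp only [Q, W, Walk.length_cons, Walk.length_append, Walk.length_reverse, length_seqWalk]
    omega

theorem IsComponentOutside.exists_isPath (hR : IsComponentOutside G m f R) {x y : V}
    (hx : x ∈ R) (hy : y ∈ R) :
    ∃ p : G.Walk x y, p.IsPath ∧ ∀ z ∈ p.support, z ∉ Set.range f := by
  classical
  obtain ⟨-, hoff, hconn, -⟩ := hR
  obtain ⟨w⟩ := hconn.preconnected ⟨x, hx⟩ ⟨y, hy⟩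
  let p : G.Walk x y := w.map (Embedding.induce R).toHom
  refine ⟨p.toPath, p.toPath.2, fun z hz => ?_⟩
  obtain ⟨z', -, rfl⟩ :=
    List.mem_map.1 (Walk.support_map _ _ ▸ p.support_toPath_subset_support hz)
  exact hoff _ z'.2

theorem IsLongestCycle.not_adj_of_crossing (hC : IsLongestCycle G m f)
    (hR : IsComponentOutside G m f R) {x u : V} (hx : x ∈ R) (hu : u ∈ R) (h0x : G.Adj (f 0) x)
    {j : ZMod m} (hj : j ≠ 0) (huj : G.Adj u (f j)) : ¬G.Adj (f 1) (f (j + 1)) := fun h1 => by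
  obtain ⟨P, hP, hPf⟩ := hR.exists_isPath hx hu
  obtain ⟨w, c, hc, hlt⟩ := hC.1.exists_isCycle_of_crossing P hP hPf h0x hj huj h1
  exact (hC.2 w c hc).not_gt hlt

theorem IsLongestCycle.not_oreEdge_one [Fintype V] [DecidableRel G.Adj]
    (hC : IsLongestCycle G m f) (hR : IsComponentOutside G m f R) {u : V} (hu : u ∈ R)
    (hA : ∃ x ∈ R, G.Adj (f 0) x) : ¬OreEdge G u (f 1) := by
  classical
  obtain ⟨x, hx, h0x⟩ := hA
  have : Fact (1 < m) := ⟨by have := hC.1.1; omega⟩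
  have hcross {y : V} (hy : y ∈ R) {j : ZMod m} (hj : j ≠ 0) (hyj : G.Adj y (f j)) :
      ¬G.Adj (f 1) (f (j + 1)) :=
    hC.not_adj_of_crossing hR hx hy h0x hj hyj
  -- for `j = 1` the chord `f 1 f 2` is an edge of the cycle: `R` would extend the cycle
  have hR1 {y : V} (hy : y ∈ R) : ¬G.Adj y (f 1) := fun h => hcross hy one_ne_zero h (hC.1.2.2 1)
  rintro ⟨-, hadj | hdeg⟩
  · exact hR1 hu hadj
  let J := Finset.univ.filter fun j => G.Adj u (f j)
  let S := R.toFinset ∪ J.image fun j => f (j + 1)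
  refine (G.degree_add_degree_lt_card S ?_ ?_).not_ge hdeg
  · have hN : G.neighborFinset u ⊆ R.toFinset.erase u ∪ J.image f := by
      intro y hy
      rw [mem_neighborFinset] at hy
      by_cases hyf : y ∈ Set.range f
      · obtain ⟨j, rfl⟩ := hyf
        exact Finset.mem_union_right _ (Finset.mem_image_of_mem f (by simpa [J] using hy))
      · simp [hR.2.2.2 u hu y hy hyf, hy.ne']
    have hdisj : Disjoint R.toFinset (J.image fun j => f (j + 1)) := by
      simp only [Finset.disjoint_left, Set.mem_toFinset, Finset.mem_image]
      rintro _ hz ⟨j, -, rfl⟩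
      exact hR.2.1 _ hz ⟨_, rfl⟩
    calc G.degree u ≤ (R.toFinset.erase u ∪ J.image f).card := Finset.card_le_card hN
      _ ≤ (R.toFinset.erase u).card + (J.image f).card := Finset.card_union_le _ _
      _ < R.toFinset.card + J.card :=
        Nat.add_lt_add_of_lt_of_le (Finset.card_erase_lt_of_mem (Set.mem_toFinset.2 hu))
          Finset.card_image_le
      _ = S.card := by
        rw [Finset.card_union_of_disjoint hdisj,
          Finset.card_image_of_injective J fun a b h => add_right_cancel (hC.1.2.1 h)]
  · simp only [S, Finset.disjoint_left, mem_neighborFinset, Finset.mem_union, Set.mem_toFinset,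
      Finset.mem_image]
    rintro z h1z (hz | ⟨j, hj, rfl⟩)
    · exact hR1 hz h1z.symm
    · by_cases hj0 : j = 0
      · subst hj0
        simp at h1z
      · exact hcross hu hj0 (Finset.mem_filter.1 hj).2 h1z

theorem IsCycleEmbedding.rotate (hf : IsCycleEmbedding G m f) (i : ZMod m) :
    IsCycleEmbedding G m fun k => f (i + k) :=
  ⟨hf.1, hf.2.1.comp (add_right_injective i),
    fun k => by simpa [add_assoc] using hf.2.2 (i + k)⟩

theorem IsCycleEmbedding.reflect (hf : IsCycleEmbedding G m f) (i : ZMod m) :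
    IsCycleEmbedding G m fun k => f (i - k) :=
  ⟨hf.1, hf.2.1.comp (sub_right_injective (b := i)),
    fun k => by simpa [sub_add_eq_sub_sub] using (hf.2.2 (i - k - 1)).symm⟩

theorem IsComponentOutside.of_range_eq {g : ZMod m → V} (hR : IsComponentOutside G m f R)
    (h : Set.range g = Set.range f) : IsComponentOutside G m g R := by
  rwa [IsComponentOutside, h]

end LongestCycle

theorem lemma3a_general {V : Type*} [Fintype V]
    (G : SimpleGraph V) [DecidableRel G.Adj]
    (m : ℕ) (f : ZMod m → V) (hC : IsLongestCycle G m f)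
    (R : Set V) (hR : IsComponentOutside G m f R)
    (u : V) (hu : u ∈ R)
    (i : ZMod m) (hA : ∃ x ∈ R, G.Adj (f i) x) :
    ¬OreEdge G u (f (i - 1)) ∧ ¬OreEdge G u (f (i + 1)) :=
  ⟨IsLongestCycle.not_oreEdge_one (f := fun k => f (i - k)) ⟨hC.1.reflect i, hC.2⟩
      (hR.of_range_eq ((Equiv.subLeft i).surjective.range_comp f)) hu (by simpa using hA),
    IsLongestCycle.not_oreEdge_one (f := fun k => f (i + k)) ⟨hC.1.rotate i, hC.2⟩
      (hR.of_range_eq ((Equiv.addLeft i).surjective.range_comp f)) hu (by simpa using hA)⟩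

/-- **Lemma 3(a) of the paper.** `G` non-Hamiltonian, `C` a longest cycle, `R` a
component of `G - V(C)`. For every `u ∈ R` and every vertex `f i` of `C` having
a neighbor in `R`, neither `{u, (f i)⁻}` nor `{u, (f i)⁺}` is an Ore-edge. -/
theorem lemma3a {V : Type*} [Fintype V] [DecidableEq V]
    (G : SimpleGraph V) [DecidableRel G.Adj]
    (hnh : ¬G.IsHamiltonian)
    (m : ℕ) (f : ZMod m → V) (hC : IsLongestCycle G m f)
    (R : Set V) (hR : IsComponentOutside G m f R)
    (u : V) (hu : u ∈ R)
    (i : ZMod m) (hA : ∃ x ∈ R, G.Adj (f i) x) :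
    ¬OreEdge G u (f (i - 1)) ∧ ¬OreEdge G u (f (i + 1)) :=
  lemma3a_general G m f hC R hR u hu i hA
end
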